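/- arXiv:2603.16756 — 2 statements merged into one kernel-verified Lean document; each statement's English description precedes it below -/
import Mathlib

section
/- Let n ≥ 1 and let Σ₀ be a real symmetric positive definite n×n matrix whose eigenvalues all lie in [λmin, λmax] with 0 < λmin ≤ λmax < ∞. Let (Δ_k)_{k∈ℕ} be a sequence of nonzero real symmetric positive semidefinite n×n matrices such that Σ₀ − Δ_k is positive definite for every k, the spectral norm ‖Σ₀^{-1/2} Δ_k Σ₀^{-1/2}‖₂ tends to 0 as k → ∞, and the ratio tr(Σ₀⁻¹ Δ_k) / tr(Δ_k) converges to some real number ρ. Define U_k := (1/2)(log det Σ₀ − log det(Σ₀ − Δ_k)) and ΔIMSPE_k := tr(Δ_k)/n. Then U_k / ΔIMSPE_k converges to the constant C := (n/2)·ρ, and this constant satisfies n/(2 λmax) ≤ C ≤ n/(2 λmin). -/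
/-
Whitening by `Q = Σ₀^{1/2}` turns `Δ_k` into `E_k = Q⁻¹ Δ_k Q⁻¹`, with
`log det (Σ₀ - Δ_k) = log det Σ₀ + log det (1 - E_k)` and `tr (Σ₀⁻¹ Δ_k) = tr E_k`.
The eigenvalues `μ` of `E_k` lie in `[0, ‖E_k‖]`, and `μ ≤ -log (1 - μ) ≤ μ / (1 - ‖E_k‖)`;
summing, `-log det (1 - E_k) / tr E_k → 1`. Hence
`U_k / ΔIMSPE_k = (n/2) · (-log det (1 - E_k) / tr E_k) · (tr (Σ₀⁻¹ Δ_k) / tr Δ_k) → (n/2) ρ`.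
The bounds on `C` come from `λmax⁻¹ ≤ Σ₀⁻¹ ≤ λmin⁻¹` in the Loewner order, which puts every ratio
`tr (Σ₀⁻¹ Δ_k) / tr Δ_k` in `[λmax⁻¹, λmin⁻¹]`.
-/

open Matrix Filter

/-- The spectral norm (largest singular value) of a real square matrix,
realized as the operator norm of the induced map on Euclidean space. -/
noncomputable def specNorm {n : ℕ} (B : Matrix (Fin n) (Fin n) ℝ) : ℝ :=
  ‖(Matrix.toEuclideanLin B).toContinuousLinearMap‖

open scoped ComplexOrder in
/-- The square root of a positive semidefinite matrix, as defined in the older Mathlib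
(`Matrix.PosSemidef.sqrt`, removed since). -/
noncomputable def Matrix.PosSemidef.sqrt {n : Type*} [Fintype n] [DecidableEq n]
    {𝕜 : Type*} [RCLike 𝕜] {A : Matrix n n 𝕜} (hA : A.PosSemidef) : Matrix n n 𝕜 :=
  hA.1.eigenvectorUnitary.1 * diagonal ((↑) ∘ (√·) ∘ hA.1.eigenvalues) *
  (star hA.1.eigenvectorUnitary : Matrix n n 𝕜)

open scoped ComplexOrder MatrixOrder Matrix.Norms.L2Operator Topology

namespace Real

lemma le_neg_log_one_sub {x : ℝ} (hx : x < 1) : x ≤ -log (1 - x) := by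
  linarith [log_le_sub_one_of_pos (sub_pos.2 hx)]

lemma neg_log_one_sub_le_div {x s : ℝ} (hx : 0 ≤ x) (hxs : x ≤ s) (hs : s < 1) :
    -log (1 - x) ≤ x / (1 - s) := by
  have hx1 : 0 < 1 - x := by linarith
  calc -log (1 - x) ≤ (1 - x)⁻¹ - 1 := by linarith [one_sub_inv_le_log_of_pos hx1]
    _ = x / (1 - x) := by field_simp; ring
    _ ≤ x / (1 - s) := div_le_div_of_nonneg_left hx (by linarith) (by linarith)

end Real

namespace Matrix

variable {n : Type*} [Fintype n] [DecidableEq n]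

lemma IsHermitian.det_one_sub {A : Matrix n n ℝ} (hA : A.IsHermitian) :
    (1 - A).det = ∏ i, (1 - hA.eigenvalues i) := by
  simpa [hA.charpoly_eq, Polynomial.eval_prod] using (A.eval_charpoly 1).symm

lemma IsHermitian.abs_eigenvalues_le_norm {A : Matrix n n ℝ} (hA : A.IsHermitian) (i : n) :
    |hA.eigenvalues i| ≤ ‖A‖ :=
  -- `NormOneClass` for the L2 operator norm needs a nonempty index type
  have : Nonempty n := ⟨i⟩
  spectrum.norm_le_norm_of_mem (hA.eigenvalues_mem_spectrum_real i)

lemma IsHermitian.neg_log_det_one_sub {A : Matrix n n ℝ} (hA : A.IsHermitian)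
    (h : ∀ i, hA.eigenvalues i < 1) :
    -Real.log (1 - A).det = ∑ i, -Real.log (1 - hA.eigenvalues i) := by
  rw [hA.det_one_sub, Real.log_prod fun i _ ↦ (sub_pos.2 (h i)).ne', Finset.sum_neg_distrib]

lemma PosSemidef.trace_le_neg_log_det_one_sub {E : Matrix n n ℝ} (hE : E.PosSemidef)
    (h : ‖E‖ < 1) : E.trace ≤ -Real.log (1 - E).det := by
  have hlt i : hE.1.eigenvalues i < 1 :=
    (le_abs_self _).trans_lt ((hE.1.abs_eigenvalues_le_norm i).trans_lt h)
  rw [hE.1.neg_log_det_one_sub hlt, hE.1.trace_eq_sum_eigenvalues]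
  exact Finset.sum_le_sum fun i _ ↦ by simpa using Real.le_neg_log_one_sub (hlt i)

lemma PosSemidef.neg_log_det_one_sub_le {E : Matrix n n ℝ} (hE : E.PosSemidef)
    (h : ‖E‖ < 1) : -Real.log (1 - E).det ≤ E.trace / (1 - ‖E‖) := by
  have hle i : hE.1.eigenvalues i ≤ ‖E‖ := (le_abs_self _).trans (hE.1.abs_eigenvalues_le_norm i)
  rw [hE.1.neg_log_det_one_sub fun i ↦ (hle i).trans_lt h, hE.1.trace_eq_sum_eigenvalues,
    Finset.sum_div]
  exact Finset.sum_le_sum fun i _ ↦ by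
    simpa using Real.neg_log_one_sub_le_div (hE.eigenvalues_nonneg i) (hle i) h

omit [DecidableEq n] in
lemma PosSemidef.trace_pos_of_ne_zero {𝕜 : Type*} [RCLike 𝕜] {A : Matrix n n 𝕜}
    (hA : A.PosSemidef) (h : A ≠ 0) : 0 < A.trace :=
  hA.trace_nonneg.lt_of_ne' (mt hA.trace_eq_zero_iff.1 h)

lemma tendsto_neg_log_det_one_sub_div_trace {ι : Type*} {l : Filter ι} {E : ι → Matrix n n ℝ}
    (hE : ∀ k, (E k).PosSemidef) (hE0 : ∀ k, E k ≠ 0) (hlim : Tendsto (fun k ↦ ‖E k‖) l (𝓝 0)) :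
    Tendsto (fun k ↦ -Real.log (1 - E k).det / (E k).trace) l (𝓝 1) := by
  have hsmall : ∀ᶠ k in l, ‖E k‖ < 1 := hlim.eventually_lt_const one_pos
  have hupper : Tendsto (fun k ↦ (1 - ‖E k‖)⁻¹) l (𝓝 1) := by
    simpa using (tendsto_const_nhds.sub hlim).inv₀ (by norm_num : (1 : ℝ) - 0 ≠ 0)
  refine tendsto_of_tendsto_of_tendsto_of_le_of_le' tendsto_const_nhds hupper ?_ ?_
  · filter_upwards [hsmall] with k hk
    exact (one_le_div ((hE k).trace_pos_of_ne_zero (hE0 k))).2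
      ((hE k).trace_le_neg_log_det_one_sub hk)
  · filter_upwards [hsmall] with k hk
    rw [div_le_iff₀ ((hE k).trace_pos_of_ne_zero (hE0 k)), ← div_eq_inv_mul]
    exact (hE k).neg_log_det_one_sub_le hk

omit [DecidableEq n] in
lemma PosSemidef.trace_mul_nonneg {𝕜 : Type*} [RCLike 𝕜] {A B : Matrix n n 𝕜}
    (hA : A.PosSemidef) (hB : B.PosSemidef) : 0 ≤ (A * B).trace := by
  classical
  set R := CFC.sqrt B
  have hR : Rᴴ = R := (CFC.sqrt_nonneg B).isSelfAdjoint
  rw [← CFC.sqrt_mul_sqrt_self B hB.nonneg, ← mul_assoc, trace_mul_cycle]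
  simpa [hR] using (hA.conjTranspose_mul_mul_same R).trace_nonneg

lemma PosDef.inv_eq_cfc {S : Matrix n n ℝ} (hS : S.PosDef) : S⁻¹ = cfc (·⁻¹ : ℝ → ℝ) S := by
  rw [cfc_ringInverse_id _ hS.isUnit, nonsing_inv_eq_ringInverse]

lemma PosDef.algebraMap_le_inv {S : Matrix n n ℝ} (hS : S.PosDef) {c : ℝ}
    (hc : ∀ i, c ≤ (hS.1.eigenvalues i)⁻¹) : algebraMap ℝ _ c ≤ S⁻¹ := by
  rw [hS.inv_eq_cfc]
  refine algebraMap_le_cfc _ _ _ (fun x hx ↦ ?_) (S.finite_real_spectrum.continuousOn _)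
  obtain ⟨i, rfl⟩ := hS.1.spectrum_real_eq_range_eigenvalues ▸ hx
  exact hc i

lemma PosDef.inv_le_algebraMap {S : Matrix n n ℝ} (hS : S.PosDef) {c : ℝ}
    (hc : ∀ i, (hS.1.eigenvalues i)⁻¹ ≤ c) : S⁻¹ ≤ algebraMap ℝ _ c := by
  rw [hS.inv_eq_cfc]
  refine cfc_le_algebraMap _ _ _ (fun x hx ↦ ?_) (S.finite_real_spectrum.continuousOn _)
  obtain ⟨i, rfl⟩ := hS.1.spectrum_real_eq_range_eigenvalues ▸ hx
  exact hc i

omit [DecidableEq n] in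
lemma trace_mul_le_trace_mul_of_le {𝕜 : Type*} [RCLike 𝕜] {A B Δ : Matrix n n 𝕜}
    (hAB : A ≤ B) (hΔ : Δ.PosSemidef) : (A * Δ).trace ≤ (B * Δ).trace := by
  simpa [sub_mul] using hAB.trace_mul_nonneg hΔ

lemma trace_algebraMap_mul {R : Type*} [CommRing R] (c : R) (Δ : Matrix n n R) :
    (algebraMap R _ c * Δ).trace = c * Δ.trace := by
  simp [Algebra.algebraMap_eq_smul_one]

lemma PosDef.trace_inv_mul_div_trace_mem_Icc {S Δ : Matrix n n ℝ} (hS : S.PosDef)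
    (hΔ : Δ.PosSemidef) (hΔ0 : Δ ≠ 0) {a b : ℝ} (ha : 0 < a)
    (hab : ∀ i, a ≤ hS.1.eigenvalues i ∧ hS.1.eigenvalues i ≤ b) :
    (S⁻¹ * Δ).trace / Δ.trace ∈ Set.Icc b⁻¹ a⁻¹ := by
  have htr := hΔ.trace_pos_of_ne_zero hΔ0
  constructor
  · rw [le_div_iff₀ htr, ← trace_algebraMap_mul]
    exact trace_mul_le_trace_mul_of_le
      (hS.algebraMap_le_inv fun i ↦ inv_anti₀ (hS.eigenvalues_pos i) (hab i).2) hΔ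
  · rw [div_le_iff₀ htr, ← trace_algebraMap_mul]
    exact trace_mul_le_trace_mul_of_le (hS.inv_le_algebraMap fun i ↦ inv_anti₀ ha (hab i).1) hΔ

section Conjugation

variable {R : Type*} [CommRing R] {S Q : Matrix n n R}

lemma mul_conj_inv_mul (hQu : IsUnit Q.det) (Δ : Matrix n n R) :
    Q * (Q⁻¹ * Δ * Q⁻¹) * Q = Δ := by
  rw [mul_assoc, nonsing_inv_mul_cancel_right _ _ hQu, mul_nonsing_inv_cancel_left _ _ hQu]

lemma trace_inv_mul_eq_trace_conj (hQ : Q * Q = S) (Δ : Matrix n n R) :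
    (S⁻¹ * Δ).trace = (Q⁻¹ * Δ * Q⁻¹).trace := by
  rw [trace_mul_cycle, ← hQ, mul_inv_rev]

lemma det_sub_eq_det_mul_det_one_sub_conj (hQ : Q * Q = S) (hQu : IsUnit Q.det)
    (Δ : Matrix n n R) : (S - Δ).det = S.det * (1 - Q⁻¹ * Δ * Q⁻¹).det := by
  have hfactor : S - Δ = Q * (1 - Q⁻¹ * Δ * Q⁻¹) * Q := by
    rw [mul_sub, sub_mul, mul_one, hQ, mul_conj_inv_mul hQu]
  rw [hfactor, det_mul, det_mul, mul_right_comm, ← det_mul, hQ]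

end Conjugation

lemma PosSemidef.sqrt_eq_cfcSqrt {𝕜 : Type*} [RCLike 𝕜] {A : Matrix n n 𝕜}
    (hA : A.PosSemidef) : hA.sqrt = CFC.sqrt A := by
  rw [CFC.sqrt_eq_real_sqrt A hA.nonneg, cfcₙ_eq_cfc, hA.1.cfc_eq, IsHermitian.cfc,
    Unitary.conjStarAlgAut_apply, PosSemidef.sqrt]

end Matrix

lemma specNorm_eq_norm {n : ℕ} (A : Matrix (Fin n) (Fin n) ℝ) : specNorm A = ‖A‖ := rfl

theorem mi_imspe_local_asymptotic_relationship_general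
    {n : ℕ}
    (S0 : Matrix (Fin n) (Fin n) ℝ) (hS0 : S0.PosDef)
    (lmin lmax : ℝ) (hlmin : 0 < lmin)
    (heig : ∀ i, lmin ≤ hS0.isHermitian.eigenvalues i ∧
      hS0.isHermitian.eigenvalues i ≤ lmax)
    (Δ : ℕ → Matrix (Fin n) (Fin n) ℝ)
    (hΔne : ∀ k, Δ k ≠ 0)
    (hΔpsd : ∀ k, (Δ k).PosSemidef)
    (hpd : ∀ k, (S0 - Δ k).PosDef)
    (hnorm : Tendsto
      (fun k => specNorm ((Matrix.PosSemidef.sqrt hS0.posSemidef)⁻¹ * Δ k * (Matrix.PosSemidef.sqrt hS0.posSemidef)⁻¹))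
      atTop (nhds 0))
    (ρ : ℝ)
    (hratio : Tendsto (fun k => (S0⁻¹ * Δ k).trace / (Δ k).trace) atTop (nhds ρ)) :
    Tendsto
      (fun k => ((1 / 2) * (Real.log S0.det - Real.log (S0 - Δ k).det))
        / ((Δ k).trace / (n : ℝ)))
      atTop (nhds (((n : ℝ) / 2) * ρ)) ∧
    (n : ℝ) / (2 * lmax) ≤ ((n : ℝ) / 2) * ρ ∧
    ((n : ℝ) / 2) * ρ ≤ (n : ℝ) / (2 * lmin) := by
  simp only [hS0.posSemidef.sqrt_eq_cfcSqrt, specNorm_eq_norm] at hnorm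
  set Q := CFC.sqrt S0
  have hQQ : Q * Q = S0 := CFC.sqrt_mul_sqrt_self S0 hS0.posSemidef.nonneg
  have hQu : IsUnit Q.det :=
    isUnit_of_mul_isUnit_left (by rw [← det_mul, hQQ]; exact hS0.isUnit.map detMonoidHom)
  have hQinv : (Q⁻¹)ᴴ = Q⁻¹ := (nonneg_iff_posSemidef.1 (CFC.sqrt_nonneg S0)).isHermitian.inv
  set E := fun k ↦ Q⁻¹ * Δ k * Q⁻¹
  have hE k : (E k).PosSemidef := by
    simpa only [hQinv] using (hΔpsd k).conjTranspose_mul_mul_same Q⁻¹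
  have hE0 k : E k ≠ 0 := fun h ↦ hΔne k (by rw [← mul_conj_inv_mul hQu (Δ k)]; simp [E, h])
  have hlog := tendsto_neg_log_det_one_sub_div_trace hE hE0 hnorm
  have htr k : (S0⁻¹ * Δ k).trace = (E k).trace := trace_inv_mul_eq_trace_conj hQQ (Δ k)
  have hdet k := det_sub_eq_det_mul_det_one_sub_conj hQQ hQu (Δ k)
  have hbounds k := hS0.trace_inv_mul_div_trace_mem_Icc (hΔpsd k) (hΔne k) hlmin heig
  refine ⟨?_, ?_, ?_⟩
  · have hlim := (hlog.mul hratio).const_mul ((n : ℝ) / 2)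
    rw [one_mul] at hlim
    refine hlim.congr fun k ↦ ?_
    have hdet0 : (1 - E k).det ≠ 0 := right_ne_zero_of_mul (hdet k ▸ (hpd k).det_pos.ne')
    rw [hdet k, Real.log_mul hS0.det_pos.ne' hdet0, htr k]
    field_simp [((hE k).trace_pos_of_ne_zero (hE0 k)).ne']
    ring
  · calc (n : ℝ) / (2 * lmax) = n / 2 * lmax⁻¹ := by ring
      _ ≤ n / 2 * ρ := by gcongr; exact ge_of_tendsto' hratio fun k ↦ (hbounds k).1
  · calc (n : ℝ) / 2 * ρ ≤ n / 2 * lmin⁻¹ := by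
          gcongr; exact le_of_tendsto' hratio fun k ↦ (hbounds k).2
      _ = n / (2 * lmin) := by ring

/-- **Local asymptotic relationship between MI and IMSPE** (Theorem 1).
If `Σ₀` is symmetric positive definite with all eigenvalues in `[λmin, λmax]`,
`(Δ_k)` are nonzero symmetric positive semidefinite matrices with `Σ₀ - Δ_k`
positive definite, `‖Σ₀^{-1/2} Δ_k Σ₀^{-1/2}‖₂ → 0`, and
`tr(Σ₀⁻¹ Δ_k)/tr(Δ_k) → ρ`, then the ratio of the mutual-information utility
`U_k = ½(log det Σ₀ − log det(Σ₀ − Δ_k))` to `ΔIMSPE_k = tr(Δ_k)/n` converges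
to `C = (n/2)·ρ`, and `n/(2 λmax) ≤ C ≤ n/(2 λmin)`. -/
theorem mi_imspe_local_asymptotic_relationship
    {n : ℕ} (hn : 1 ≤ n)
    (S0 : Matrix (Fin n) (Fin n) ℝ) (hS0 : S0.PosDef)
    (lmin lmax : ℝ) (hlmin : 0 < lmin) (hminmax : lmin ≤ lmax)
    (heig : ∀ i, lmin ≤ hS0.isHermitian.eigenvalues i ∧
      hS0.isHermitian.eigenvalues i ≤ lmax)
    (Δ : ℕ → Matrix (Fin n) (Fin n) ℝ)
    (hΔne : ∀ k, Δ k ≠ 0)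
    (hΔpsd : ∀ k, (Δ k).PosSemidef)
    (hpd : ∀ k, (S0 - Δ k).PosDef)
    (hnorm : Tendsto
      (fun k => specNorm ((Matrix.PosSemidef.sqrt hS0.posSemidef)⁻¹ * Δ k * (Matrix.PosSemidef.sqrt hS0.posSemidef)⁻¹))
      atTop (nhds 0))
    (ρ : ℝ)
    (hratio : Tendsto (fun k => (S0⁻¹ * Δ k).trace / (Δ k).trace) atTop (nhds ρ)) :
    Tendsto
      (fun k => ((1 / 2) * (Real.log S0.det - Real.log (S0 - Δ k).det))
        / ((Δ k).trace / (n : ℝ)))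
      atTop (nhds (((n : ℝ) / 2) * ρ)) ∧
    (n : ℝ) / (2 * lmax) ≤ ((n : ℝ) / 2) * ρ ∧
    ((n : ℝ) / 2) * ρ ≤ (n : ℝ) / (2 * lmin) :=
  mi_imspe_local_asymptotic_relationship_general S0 hS0 lmin lmax hlmin heig Δ hΔne hΔpsd hpd hnorm
    ρ hratio
end

section
/- Let B be a real symmetric positive semidefinite n×n matrix with spectral norm ‖B‖₂ < 1/2. Then I − B is positive definite and | −(1/2) log det(I − B) − (1/2) tr(B) | ≤ (1/2) ‖B‖_F², where ‖B‖_F denotes the Frobenius norm. -/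
/-!
Diagonalize `B = U diag(μ) Uᴴ`, where `0 ≤ μᵢ ≤ ‖B‖₂ < 1/2`. Then `I − B` has eigenvalues
`1 − μᵢ ∈ [1/2, 1]`, and both sides of the inequality are sums over the spectrum:
`log det (I − B) = ∑ log (1 − μᵢ)`, `tr B = ∑ μᵢ` and `‖B‖_F² = ∑ μᵢ²`. The claim thus reduces
to the scalar bound `|log (1 − x) + x| ≤ x²` for `0 ≤ x ≤ 1/2`, whose nontrivial half is
`1 ≤ (1 − x) exp (x + x²)`.
-/

open Matrix

/-- The Frobenius norm of a real square matrix. -/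
noncomputable def frobNorm {n : ℕ} (B : Matrix (Fin n) (Fin n) ℝ) : ℝ :=
  Real.sqrt (∑ i, ∑ j, (B i j) ^ 2)

namespace Real

theorem neg_sq_le_log_one_sub_add {x : ℝ} (h0 : 0 ≤ x) (h1 : x ≤ 1 / 2) :
    -x ^ 2 ≤ log (1 - x) + x := by
  have hexp := quadratic_le_exp_of_nonneg (by positivity : 0 ≤ x + x ^ 2)
  have hprod : 1 ≤ (1 - x) * exp (x + x ^ 2) :=
    calc (1 : ℝ) ≤ (1 - x) * (1 + (x + x ^ 2) + (x + x ^ 2) ^ 2 / 2) := by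
          nlinarith [mul_nonneg h0 h0, mul_nonneg (mul_nonneg h0 h0) h0,
            mul_nonneg (mul_nonneg h0 h0) (sub_nonneg.2 h1)]
      _ ≤ (1 - x) * exp (x + x ^ 2) := by gcongr; linarith
  have hlog := log_nonneg hprod
  rw [log_mul (by linarith) (exp_pos _).ne', log_exp] at hlog
  linarith

theorem abs_log_one_sub_add_le_sq {x : ℝ} (h0 : 0 ≤ x) (h1 : x ≤ 1 / 2) :
    |log (1 - x) + x| ≤ x ^ 2 :=
  abs_le.2 ⟨neg_sq_le_log_one_sub_add h0 h1,
    by linarith [log_le_sub_one_of_pos (by linarith : 0 < 1 - x), sq_nonneg x]⟩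

end Real

namespace Matrix.IsHermitian

open scoped ComplexOrder

variable {𝕜 n : Type*} [RCLike 𝕜] [Fintype n] [DecidableEq n] {A : Matrix n n 𝕜}

theorem det_cfc (hA : A.IsHermitian) (f : ℝ → ℝ) :
    (cfc f A).det = ∏ i, (f (hA.eigenvalues i) : 𝕜) := by
  rw [hA.cfc_eq]
  simp [IsHermitian.cfc, -Unitary.conjStarAlgAut_apply]

theorem trace_cfc (hA : A.IsHermitian) (f : ℝ → ℝ) :
    (cfc f A).trace = ∑ i, (f (hA.eigenvalues i) : 𝕜) := by
  rw [hA.cfc_eq]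
  simp [IsHermitian.cfc, -Unitary.conjStarAlgAut_apply]

theorem posDef_cfc (hA : A.IsHermitian) {f : ℝ → ℝ} (hf : ∀ i, 0 < f (hA.eigenvalues i)) :
    (cfc f A).PosDef := by
  rw [hA.cfc_eq, IsHermitian.cfc, Unitary.conjStarAlgAut_apply,
    Unitary.isUnit_coe.posDef_star_right_conjugate_iff, posDef_diagonal_iff]
  simpa using hf

end Matrix.IsHermitian

section Spectral

variable {n : ℕ} {B : Matrix (Fin n) (Fin n) ℝ}

open scoped Matrix.Norms.L2Operator in
theorem abs_eigenvalues_le_specNorm (hB : B.IsHermitian) (i : Fin n) :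
    |hB.eigenvalues i| ≤ specNorm B :=
  have : Nonempty (Fin n) := ⟨i⟩
  spectrum.norm_le_norm_of_mem (hB.eigenvalues_mem_spectrum_real i)

theorem frobNorm_sq_eq_sum_eigenvalues_sq (hB : B.IsHermitian) :
    frobNorm B ^ 2 = ∑ i, hB.eigenvalues i ^ 2 := by
  have hsq : ∑ i, ∑ j, B i j ^ 2 = (B * B).trace := by
    simp only [trace, diag_apply, mul_apply, sq]
    refine Finset.sum_congr rfl fun i _ => Finset.sum_congr rfl fun j _ => ?_
    rw [← hB.apply j i, star_trivial]
  rw [frobNorm, Real.sq_sqrt (by positivity), hsq, ← sq, ← cfc_pow_id (R := ℝ) B 2, hB.trace_cfc]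
  simp

end Spectral

/-- Second-order Taylor expansion of the log-determinant: if `B` is real symmetric
positive semidefinite with spectral norm `< 1/2`, then `I − B` is positive definite
and `| −½ log det(I − B) − ½ tr(B) | ≤ ½ ‖B‖_F²`. -/
theorem neg_half_log_det_sub_half_trace_abs_le
    {n : ℕ} (B : Matrix (Fin n) (Fin n) ℝ)
    (hB : B.PosSemidef) (hnorm : specNorm B < 1 / 2) :
    ((1 : Matrix (Fin n) (Fin n) ℝ) - B).PosDef ∧
    |(-(1 / 2)) * Real.log ((1 : Matrix (Fin n) (Fin n) ℝ) - B).det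
        - (1 / 2) * B.trace| ≤ (1 / 2) * (frobNorm B) ^ 2 := by
  have hH : B.IsHermitian := hB.isHermitian
  set μ := hH.eigenvalues
  have hμ0 : ∀ i, 0 ≤ μ i := hB.eigenvalues_nonneg
  have hμ_le : ∀ i, μ i ≤ 1 / 2 := fun i => by
    linarith [le_abs_self (μ i), abs_eigenvalues_le_specNorm hH i]
  have hcfc : 1 - B = cfc (fun x : ℝ => 1 - x) B := by
    rw [cfc_sub (fun _ => 1) (fun x => x) B, cfc_const_one ℝ B, cfc_id' ℝ B]
  refine ⟨hcfc ▸ hH.posDef_cfc fun i => by linarith [hμ_le i], ?_⟩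
  have hlogdet : Real.log (1 - B).det = ∑ i, Real.log (1 - μ i) := by
    rw [hcfc, hH.det_cfc, RCLike.ofReal_real_eq_id]
    exact Real.log_prod fun i _ => (by linarith [hμ_le i] : (0 : ℝ) < 1 - μ i).ne'
  have htrace : B.trace = ∑ i, μ i := by simpa using hH.trace_eq_sum_eigenvalues
  rw [hlogdet, htrace, frobNorm_sq_eq_sum_eigenvalues_sq hH]
  calc |-(1 / 2) * ∑ i, Real.log (1 - μ i) - 1 / 2 * ∑ i, μ i|
      = 1 / 2 * |∑ i, (Real.log (1 - μ i) + μ i)| := by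
        rw [Finset.sum_add_distrib, show (1 / 2 : ℝ) = |-(1 / 2)| by norm_num, ← abs_mul]
        ring_nf
    _ ≤ 1 / 2 * ∑ i, μ i ^ 2 := by
        gcongr
        exact (Finset.abs_sum_le_sum_abs _ _).trans
          (Finset.sum_le_sum fun i _ => Real.abs_log_one_sub_add_le_sq (hμ0 i) (hμ_le i))
end
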